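/- arXiv:math/0701740 — 4 statements merged into one kernel-verified Lean document; each statement's English description precedes it below -/
import Mathlib

section
/- Every maximal isotropic subspace L of E = V ⊕ V* (with the standard symmetric pairing) whose projection to V is all of C ⊆ V and which satisfies π(L) = C is of the form τ_C^F for a unique alternating bilinear form F on C. That is, if L is maximal isotropic with π(L) = C, then there exists a unique alternating bilinear form F on C such that L = {(X,ξ) : X ∈ C, ξ|_C = F(X,·)}. -/
open Module Submodule

noncomputable section

variable (V : Type*) [AddCommGroup V] [Module ℝ V]

abbrev EE := V × Module.Dual ℝ V

def pairE : LinearMap.BilinForm ℝ (EE V) :=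
  LinearMap.mk₂ ℝ (fun u v => (u.2 v.1 + v.2 u.1) / 2)
    (by intro a b c; simp; ring)
    (by intro r a b; simp [smul_eq_mul]; ring)
    (by intro a b c; simp; ring)
    (by intro r a b; simp [smul_eq_mul]; ring)

def orthE (D : Submodule ℝ (EE V)) : Submodule ℝ (EE V) where
  carrier := {e | ∀ d ∈ D, pairE V e d = 0}
  add_mem' := by
    intro a b ha hb d hd
    simp only [map_add, LinearMap.add_apply, ha d hd, hb d hd, add_zero]
  zero_mem' := by intro d hd; simp
  smul_mem' := by
    intro r a ha d hd
    simp only [map_smul, LinearMap.smul_apply, ha d hd, smul_zero]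

def piE : EE V →ₗ[ℝ] V := LinearMap.fst ℝ V (Module.Dual ℝ V)

instance instQuotE (P : Submodule ℝ (EE V)) : HasQuotient ↥P (Submodule ℝ ↥P) :=
  Submodule.hasQuotient (R := ℝ) (M := ↥P)

def memTau (C : Submodule ℝ V) (F : LinearMap.BilinForm ℝ C) (e : EE V) : Prop :=
  e.1 ∈ C ∧ ∀ (hx : e.1 ∈ C) (c : C), e.2 (c : V) = F ⟨e.1, hx⟩ c


theorem aux_finrank_map_add_inf_ker {K M N : Type*} [Field K] [AddCommGroup M] [Module K M]
    [AddCommGroup N] [Module K N] (f : M →ₗ[K] N) (L : Submodule K M)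
    [FiniteDimensional K L] :
    Module.finrank K (L.map f) + Module.finrank K (L ⊓ LinearMap.ker f : Submodule K M) =
      Module.finrank K L := by
  have h := LinearMap.finrank_range_add_finrank_ker (f.comp L.subtype)
  have hr : LinearMap.range (f.comp L.subtype) = L.map f := by
    rw [LinearMap.range_comp, Submodule.range_subtype]
  have hk : LinearMap.ker (f.comp L.subtype) =
      Submodule.comap L.subtype (L ⊓ LinearMap.ker f) := by
    rw [LinearMap.ker_comp, Submodule.comap_inf, Submodule.comap_subtype_self, top_inf_eq]
  rw [hr, hk] at h
  rw [← h]
  congr 1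
  exact (Submodule.comapSubtypeEquivOfLe
    (inf_le_left : L ⊓ LinearMap.ker f ≤ L)).finrank_eq.symm

set_option maxHeartbeats 1000000 in
theorem stmt_4 [FiniteDimensional ℝ V] (C : Submodule ℝ V) (L : Submodule ℝ (EE V))
    (hiso : ∀ a ∈ L, ∀ b ∈ L, pairE V a b = 0)
    (hdim : Module.finrank ℝ L = Module.finrank ℝ V)
    (hpi : L.map (piE V) = C) :
    ∃! F : LinearMap.BilinForm ℝ C,
      (∀ x : C, F x x = 0) ∧ (L : Set (EE V)) = {e | memTau V C F e} := by
  classical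
  -- existence of lifts
  have hex : ∀ x : C, ∃ ξ : Module.Dual ℝ V, ((x : V), ξ) ∈ L := by
    intro x
    have hx : (x : V) ∈ L.map (piE V) := hpi ▸ x.2
    obtain ⟨e, heL, he1⟩ := hx
    refine ⟨e.2, ?_⟩
    have : ((x : V), e.2) = e := Prod.ext he1.symm rfl
    rw [this]; exact heL
  choose lift hlift using hex
  -- well-definedness
  have wd : ∀ (x : V) (ξ ξ' : Module.Dual ℝ V), (x, ξ) ∈ L → (x, ξ') ∈ L →
      ∀ c ∈ C, ξ c = ξ' c := by
    intro x ξ ξ' h h' c hc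
    have hd : ((0 : V), ξ - ξ') ∈ L := by
      have := L.sub_mem h h'
      simpa [Prod.ext_iff] using this
    have := hiso _ hd _ (hlift ⟨c, hc⟩)
    simp [pairE] at this
    linarith
  -- the bilinear form
  let F : LinearMap.BilinForm ℝ C := LinearMap.mk₂ ℝ (fun x c => lift x (c : V))
    (by
      intro a b c
      have hm : (((a + b : C) : V), lift a + lift b) ∈ L := by
        have := L.add_mem (hlift a) (hlift b)
        simpa [Prod.ext_iff] using this
      have := wd _ _ _ (hlift (a + b)) hm (c : V) c.2
      simpa using this)
    (by
      intro r a c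
      have hm : (((r • a : C) : V), r • lift a) ∈ L := by
        have := L.smul_mem r (hlift a)
        simpa [Prod.ext_iff] using this
      have := wd _ _ _ (hlift (r • a)) hm (c : V) c.2
      simpa using this)
    (by intro a b c; simp)
    (by intro r a c; simp)
  have hFapp : ∀ (x c : C), F x c = lift x (c : V) := fun x c => rfl
  -- alternating
  have hAlt : ∀ x : C, F x x = 0 := by
    intro x
    have := hiso _ (hlift x) _ (hlift x)
    simp [pairE] at this
    rw [hFapp]
    linarith
  -- L ⊆ tau
  have hLsub : ∀ e ∈ L, memTau V C F e := by
    intro e he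
    have h1 : e.1 ∈ C := hpi ▸ ⟨e, he, rfl⟩
    refine ⟨h1, fun hx c => ?_⟩
    have he' : (e.1, e.2) ∈ L := by rwa [Prod.mk.eta]
    exact wd e.1 e.2 (lift ⟨e.1, hx⟩) he' (hlift ⟨e.1, hx⟩) (c : V) c.2
  -- the kernel piece equals ⊥ × annihilator
  set K : Submodule ℝ (EE V) := L ⊓ LinearMap.ker (piE V) with hK
  set M : Submodule ℝ (EE V) := (⊥ : Submodule ℝ V).prod C.dualAnnihilator with hM
  have hKsubM : K ≤ M := by
    rintro ⟨x, η⟩ ⟨hL, hk⟩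
    have hx0 : x = 0 := hk
    subst hx0
    refine Submodule.mem_prod.mpr ⟨Submodule.mem_bot ℝ |>.mpr rfl, ?_⟩
    rw [Submodule.mem_dualAnnihilator]
    intro w hw
    have := hiso _ hL _ (hlift ⟨w, hw⟩)
    simp [pairE] at this
    linarith
  have hdual : FiniteDimensional ℝ (Module.Dual ℝ V) := inferInstance
  have hEE : FiniteDimensional ℝ (EE V) := inferInstance
  have hLfin : FiniteDimensional ℝ L := inferInstance
  have hMfin : FiniteDimensional ℝ M := inferInstance
  -- finrank computations
  have hrk1 : finrank ℝ C + finrank ℝ K = finrank ℝ L := by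
    have h := aux_finrank_map_add_inf_ker (piE V) L
    rw [hpi] at h
    exact h
  have hrk2 : finrank ℝ C + finrank ℝ C.dualAnnihilator = finrank ℝ V := by
    have h1 : finrank ℝ C.dualAnnihilator = finrank ℝ (V ⧸ C) :=
      (Subspace.quotEquivAnnihilator C).symm.finrank_eq
    rw [h1, add_comm]
    exact Submodule.finrank_quotient_add_finrank C
  have hrkM : finrank ℝ M = finrank ℝ C.dualAnnihilator := by
    have : M = C.dualAnnihilator.map (LinearMap.inr ℝ V (Module.Dual ℝ V)) :=
      (Submodule.map_inr _).symm
    rw [this]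
    exact (Submodule.equivMapOfInjective _ LinearMap.inr_injective
      C.dualAnnihilator).symm.finrank_eq
  have hKM : K = M := by
    apply Submodule.eq_of_le_of_finrank_eq hKsubM
    omega
  -- tau ⊆ L
  have hTsub : ∀ e : EE V, memTau V C F e → e ∈ L := by
    rintro ⟨x, ξ⟩ ⟨hx, hξ⟩
    have h1 : (x, lift ⟨x, hx⟩) ∈ L := hlift ⟨x, hx⟩
    have h2 : ((0 : V), ξ - lift ⟨x, hx⟩) ∈ K := by
      rw [hKM]
      refine Submodule.mem_prod.mpr ⟨Submodule.mem_bot ℝ |>.mpr rfl, ?_⟩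
      rw [Submodule.mem_dualAnnihilator]
      intro w hw
      have := hξ hx ⟨w, hw⟩
      rw [hFapp] at this
      simp [this]
    have h2' : ((0 : V), ξ - lift ⟨x, hx⟩) ∈ L := h2.1
    have := L.add_mem h1 h2'
    simpa [Prod.ext_iff] using this
  refine ⟨F, ⟨hAlt, ?_⟩, ?_⟩
  · ext e
    exact ⟨fun he => hLsub e he, fun he => hTsub e he⟩
  · rintro F' ⟨hF'alt, hF'⟩
    apply LinearMap.ext; intro x; apply LinearMap.ext; intro c
    have hxL : ((x : V), lift x) ∈ L := hlift x
    have hmem : memTau V C F' ((x : V), lift x) := by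
      have h' : ((x : V), lift x) ∈ (L : Set (EE V)) := hxL
      rw [hF'] at h'
      exact h'
    have := hmem.2 x.2 c
    rw [hFapp x c]
    simpa using this.symm
end
end

section
/- Let V be a finite-dimensional real vector space, B an alternating bilinear form on V, C ⊆ V a subspace and F an alternating bilinear form on C. Then the gauge transformation e^B maps τ_C^F onto τ_C^{F + i*B}, where i*B is the restriction of B to C. In particular e^{-B} maps τ_C^{i*B} onto τ_C^0 = C ⊕ C°. -/
open Module Submodule

noncomputable section

variable (V : Type*) [AddCommGroup V] [Module ℝ V]

theorem stmt_6 [FiniteDimensional ℝ V] (B : LinearMap.BilinForm ℝ V) (hB : ∀ x, B x x = 0)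
    (C : Submodule ℝ V) (F : LinearMap.BilinForm ℝ C) (hF : ∀ x : C, F x x = 0) :
    ((fun e : EE V => (e.1, e.2 + B e.1)) '' {e | memTau V C F e}
        = {e | memTau V C (F + B.restrict C) e}) ∧
    ((fun e : EE V => (e.1, e.2 - B e.1)) '' {e | memTau V C (B.restrict C) e}
        = {e | memTau V C 0 e}) := by
  constructor
  · ext e
    constructor
    · rintro ⟨a, ⟨haC, ha⟩, rfl⟩
      refine ⟨haC, fun hx c => ?_⟩
      simp [ha haC c, LinearMap.BilinForm.restrict, LinearMap.domRestrict₁₂_apply]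
    · rintro ⟨heC, he⟩
      refine ⟨(e.1, e.2 - B e.1), ⟨heC, fun hx c => ?_⟩, by simp⟩
      have := he heC c
      simp [LinearMap.BilinForm.restrict, LinearMap.domRestrict₁₂_apply] at this
      simp [this]
  · ext e
    constructor
    · rintro ⟨a, ⟨haC, ha⟩, rfl⟩
      refine ⟨haC, fun hx c => ?_⟩
      have := ha haC c
      simp [LinearMap.BilinForm.restrict, LinearMap.domRestrict₁₂_apply] at this
      simp [this]
    · rintro ⟨heC, he⟩
      refine ⟨(e.1, e.2 + B e.1), ⟨heC, fun hx c => ?_⟩, by simp⟩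
      have := he heC c
      simp [LinearMap.BilinForm.restrict, LinearMap.domRestrict₁₂_apply, this]
end
end

section
/- Let E = V ⊕ V* with the standard pairing and let J be a linear generalized complex structure on E (J² = −Id, pairing-preserving). Let C ⊆ V be a subspace and L a maximal isotropic subspace of E with π(L) = C and J(L) = L. Define the sharp map ♯ : V* → V by ♯ξ = π(J(0,ξ)). Then ♯(C°) ⊆ C, i.e., C is coisotropic for the Poisson bivector induced by J. -/
open Module Submodule

noncomputable section

variable (V : Type*) [AddCommGroup V] [Module ℝ V]

lemma pairE_apply (u v : EE V) : pairE V u v = (u.2 v.1 + v.2 u.1) / 2 := rfl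

lemma isotropic_finrank_le [FiniteDimensional ℝ V] (W : Submodule ℝ (EE V))
    (hW : ∀ a ∈ W, ∀ b ∈ W, pairE V a b = 0) :
    Module.finrank ℝ W ≤ Module.finrank ℝ V := by
  classical
  have hEE : Module.finrank ℝ (EE V) = 2 * Module.finrank ℝ V := by
    simp [Module.finrank_prod, Subspace.dual_finrank_eq, two_mul]
  let φ : W →ₗ[ℝ] W.dualAnnihilator :=
    { toFun := fun w => ⟨pairE V (w : EE V), by
        rw [Submodule.mem_dualAnnihilator]
        intro d hd
        exact hW w w.2 d hd⟩
      map_add' := fun a b => Subtype.ext (by simp)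
      map_smul' := fun r a => Subtype.ext (by simp) }
  have hinj : Function.Injective φ := by
    rw [injective_iff_map_eq_zero]
    intro a ha
    have h : pairE V (a : EE V) = 0 := congrArg Subtype.val ha
    have hx : (a : EE V).1 = 0 := by
      rw [← Module.forall_dual_apply_eq_zero_iff ℝ]
      intro η
      have := congrFun (congrArg DFunLike.coe h) ((0 : V), η)
      simp [pairE_apply] at this
      linarith [this]
    have hξ : (a : EE V).2 = 0 := by
      ext y
      have := congrFun (congrArg DFunLike.coe h) ((y : V), (0 : Module.Dual ℝ V))
      simp [pairE_apply] at this
      simpa using this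
    have : (a : EE V) = 0 := Prod.ext hx hξ
    exact Subtype.ext this
  have h1 : Module.finrank ℝ W ≤ Module.finrank ℝ W.dualAnnihilator :=
    LinearMap.finrank_le_finrank_of_injective hinj
  have h2 : Module.finrank ℝ (EE V ⧸ W) = Module.finrank ℝ W.dualAnnihilator :=
    (Subspace.quotEquivAnnihilator W).finrank_eq
  have h3 := Submodule.finrank_quotient_add_finrank W
  omega

theorem stmt_8 [FiniteDimensional ℝ V] (J : EE V →ₗ[ℝ] EE V)
    (hJ2 : ∀ e, J (J e) = -e)
    (hJp : ∀ u v, pairE V (J u) (J v) = pairE V u v)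
    (C : Submodule ℝ V) (L : Submodule ℝ (EE V))
    (hiso : ∀ a ∈ L, ∀ b ∈ L, pairE V a b = 0)
    (hdim : Module.finrank ℝ L = Module.finrank ℝ V)
    (hpi : L.map (piE V) = C)
    (hJL : L.map J = L) :
    ∀ ξ ∈ C.dualAnnihilator, (J ((0 : V), ξ)).1 ∈ C := by
  intro ξ hξ
  -- pairing of (0,ξ) with any element of L vanishes
  have hzero : ∀ b ∈ L, pairE V ((0 : V), ξ) b = 0 := by
    intro b hb
    have hb1 : b.1 ∈ C := by
      rw [← hpi]
      exact ⟨b, hb, rfl⟩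
    have : ξ b.1 = 0 := (Submodule.mem_dualAnnihilator ξ).mp hξ b.1 hb1
    simp [pairE_apply, this]
  have hsymm : ∀ u v : EE V, pairE V u v = pairE V v u := by
    intro u v; simp [pairE_apply]; ring
  -- L ⊔ span {(0,ξ)} is isotropic
  have hmem : ((0 : V), ξ) ∈ L := by
    set L' := L ⊔ (ℝ ∙ ((0 : V), ξ)) with hL'def
    have hiso' : ∀ a ∈ L', ∀ b ∈ L', pairE V a b = 0 := by
      intro a ha b hb
      obtain ⟨la, hla, ma, hma, rfl⟩ := Submodule.mem_sup.mp ha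
      obtain ⟨lb, hlb, mb, hmb, rfl⟩ := Submodule.mem_sup.mp hb
      obtain ⟨r, rfl⟩ := Submodule.mem_span_singleton.mp hma
      obtain ⟨s, rfl⟩ := Submodule.mem_span_singleton.mp hmb
      have h1 := hiso la hla lb hlb
      have h2 := hzero lb hlb
      have h3 := hzero la hla
      have h4 : pairE V ((0:V), ξ) ((0:V), ξ) = 0 := by simp [pairE_apply]
      have h3' : pairE V la ((0:V), ξ) = 0 := by rw [hsymm]; exact h3
      simp only [map_add, map_smul, LinearMap.add_apply, LinearMap.smul_apply,
        h1, h2, h3', h4, smul_zero, add_zero, zero_add]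
    have hle : Module.finrank ℝ L' ≤ Module.finrank ℝ V :=
      isotropic_finrank_le V L' hiso'
    have hLeq : L = L' := Submodule.eq_of_le_of_finrank_le le_sup_left (by omega)
    have : ((0 : V), ξ) ∈ L' :=
      Submodule.mem_sup_right (Submodule.mem_span_singleton_self _)
    rwa [← hLeq] at this
  have hJmem : J ((0 : V), ξ) ∈ L := by
    rw [← hJL]; exact ⟨_, hmem, rfl⟩
  rw [← hpi]
  exact ⟨_, hJmem, rfl⟩
end
end

section
/- Let E = V ⊕ V* with the standard pairing, J a linear generalized complex structure, and K ⊆ E an isotropic subspace with J(K) ∩ K^⊥ ⊆ K. Then J induces a well-defined endomorphism J̄ on the quotient (K^⊥ ∩ J K^⊥)/(K ∩ J K^⊥) ≅ K^⊥/K satisfying J̄² = −Id, and J̄ preserves the symmetric pairing induced on K^⊥/K. -/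
open Module Submodule

noncomputable section

variable (V : Type*) [AddCommGroup V] [Module ℝ V]

lemma pairE_symm (u v : EE V) : pairE V u v = pairE V v u := by
  simp [pairE_apply]; ring

lemma pairE_refl : (pairE V).IsRefl := by
  intro u v h; rw [pairE_symm] at h; exact h

lemma pairE_nondeg [FiniteDimensional ℝ V] : (pairE V).Nondegenerate := by
  rw [LinearMap.BilinForm.Nondegenerate, LinearMap.IsRefl.nondegenerate_iff_separatingLeft (pairE_refl V)]
  intro e h
  have h1 : e.2 = 0 := by
    ext y
    have := h (y, 0)
    simp [pairE_apply] at this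
    simpa using this
  have h2 : e.1 = 0 := by
    rw [← Module.forall_dual_apply_eq_zero_iff ℝ e.1]
    intro g
    have := h (0, g)
    simp [pairE_apply] at this
    simpa using this
  exact Prod.ext h2 h1

lemma mem_orthE {D : Submodule ℝ (EE V)} {e : EE V} :
    e ∈ orthE V D ↔ ∀ d ∈ D, pairE V e d = 0 := Iff.rfl

lemma orthE_eq (D : Submodule ℝ (EE V)) : orthE V D = (pairE V).orthogonal D := by
  ext e
  constructor
  · intro h d hd; exact pairE_refl V _ _ (h d hd)
  · intro h d hd; exact pairE_refl V _ _ (h d hd)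

lemma orthE_antitone {A B : Submodule ℝ (EE V)} (h : A ≤ B) : orthE V B ≤ orthE V A :=
  fun _ he d hd => he d (h hd)

lemma orthE_orthE [FiniteDimensional ℝ V] (D : Submodule ℝ (EE V)) :
    orthE V (orthE V D) = D := by
  rw [orthE_eq, orthE_eq]
  exact LinearMap.BilinForm.orthogonal_orthogonal (pairE_nondeg V) (pairE_refl V) D
open Module Submodule



lemma key_decomp [FiniteDimensional ℝ V] (J : EE V →ₗ[ℝ] EE V)
    (hJ2 : ∀ e, J (J e) = -e)
    (hJp : ∀ u v, pairE V (J u) (J v) = pairE V u v)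
    (K : Submodule ℝ (EE V)) (hKJ : K.map J ⊓ orthE V K ≤ K) :
    orthE V K ≤ K ⊔ (orthE V K).map J := by
  set O := orthE V K with hO
  set X := K ⊔ O.map J with hX
  have hXorth : orthE V X ≤ K := by
    intro e he
    have heO : e ∈ O := fun d hd => he d (le_sup_left (a := K) (b := O.map J) hd)
    have hJeK : J e ∈ K := by
      rw [← orthE_orthE V K]
      intro f hf
      have h1 : pairE V e (J f) = 0 := he (J f) (le_sup_right (a := K) (mem_map_of_mem hf))
      have h2 : pairE V (J e) (J (J f)) = pairE V e (J f) := hJp e (J f)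
      rw [hJ2, map_neg, h1] at h2
      linarith [h2]
    have heJK : e ∈ K.map J := ⟨-(J e), neg_mem hJeK, by rw [map_neg, hJ2, neg_neg]⟩
    exact hKJ ⟨heJK, heO⟩
  calc O = orthE V K := hO
    _ ≤ orthE V (orthE V X) := orthE_antitone V hXorth
    _ = X := orthE_orthE V X

set_option maxHeartbeats 1000000 in
theorem stmt_11 [FiniteDimensional ℝ V] (J : EE V →ₗ[ℝ] EE V)
    (hJ2 : ∀ e, J (J e) = -e)
    (hJp : ∀ u v, pairE V (J u) (J v) = pairE V u v)
    (K : Submodule ℝ (EE V)) (hK : K ≤ orthE V K)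
    (hKJ : K.map J ⊓ orthE V K ≤ K) :
    ∃ Jbar : (orthE V K ⧸ K.comap (orthE V K).subtype) →ₗ[ℝ]
             (orthE V K ⧸ K.comap (orthE V K).subtype),
      (∀ (e : EE V) (he : e ∈ orthE V K) (heJ : J e ∈ orthE V K),
        Jbar (Submodule.Quotient.mk ⟨e, he⟩) = Submodule.Quotient.mk ⟨J e, heJ⟩) ∧
      (∀ q, Jbar (Jbar q) = -q) ∧
      ∃ pbar : LinearMap.BilinForm ℝ (orthE V K ⧸ K.comap (orthE V K).subtype),
        (∀ e f : orthE V K,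
          pbar (Submodule.Quotient.mk e) (Submodule.Quotient.mk f) = pairE V e f) ∧
        ∀ q r, pbar (Jbar q) (Jbar r) = pbar q r := by
  classical
  -- membership in the quotient-relevant submodule W
  have hJW : ∀ e : EE V, e ∈ orthE V K ⊓ (orthE V K).map J → J e ∈ orthE V K := by
    rintro e ⟨h1, d, hd, rfl⟩
    rw [hJ2]
    exact neg_mem hd
  have hJWW : ∀ e : EE V, e ∈ orthE V K ⊓ (orthE V K).map J →
      J e ∈ orthE V K ⊓ (orthE V K).map J := by
    rintro e he
    exact ⟨hJW e he, ⟨e, he.1, rfl⟩⟩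
  -- comparing quotient classes
  have hmemq : ∀ x y : ↥(orthE V K),
      (Submodule.Quotient.mk x :
        orthE V K ⧸ K.comap (orthE V K).subtype) = Submodule.Quotient.mk y ↔
        (x : EE V) - y ∈ K := by
    intro x y
    rw [Submodule.Quotient.eq, Submodule.mem_comap]
    simp
  -- every class has a representative in W := orthE V K ⊓ (orthE V K).map J
  have hrep : ∀ q : (orthE V K ⧸ K.comap (orthE V K).subtype),
      ∃ e : EE V, ∃ hWe : e ∈ orthE V K ⊓ (orthE V K).map J,
        (Submodule.Quotient.mk ⟨e, hWe.1⟩ :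
          orthE V K ⧸ K.comap (orthE V K).subtype) = q := by
    intro q
    obtain ⟨⟨e, he⟩, rfl⟩ := Submodule.Quotient.mk_surjective _ q
    have hdec := key_decomp V J hJ2 hJp K hKJ he
    rw [Submodule.mem_sup] at hdec
    obtain ⟨k, hk, m, hm, hkm⟩ := hdec
    have hmO : m ∈ orthE V K := by
      have hme : m = e - k := by rw [← hkm]; abel
      rw [hme]
      exact sub_mem he (hK hk)
    refine ⟨m, ⟨hmO, hm⟩, ?_⟩
    rw [hmemq]
    have : m - e = -k := by rw [← hkm]; abel
    show m - e ∈ K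
    rw [this]
    exact neg_mem hk
  -- the function underlying Jbar, via choice of representatives
  let jfun : (orthE V K ⧸ K.comap (orthE V K).subtype) →
      (orthE V K ⧸ K.comap (orthE V K).subtype) := fun q =>
    Submodule.Quotient.mk ⟨J (hrep q).choose, hJW _ (hrep q).choose_spec.choose⟩
  -- jfun is well-defined on W-representatives
  have hkey : ∀ (q) (e : EE V) (hWe : e ∈ orthE V K ⊓ (orthE V K).map J),
      (Submodule.Quotient.mk ⟨e, hWe.1⟩ :
        orthE V K ⧸ K.comap (orthE V K).subtype) = q →
      jfun q = Submodule.Quotient.mk ⟨J e, hJW e hWe⟩ := by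
    intro q e hWe hq
    obtain ⟨hWe', hq'⟩ := (hrep q).choose_spec
    show (Submodule.Quotient.mk ⟨J (hrep q).choose, hJW _ hWe'⟩ :
      orthE V K ⧸ K.comap (orthE V K).subtype) = Submodule.Quotient.mk ⟨J e, hJW e hWe⟩
    rw [hmemq]
    have hdiff : (hrep q).choose - e ∈ K := by
      have h0 := hq'.trans hq.symm
      rw [hmemq] at h0
      exact h0
    have h1 : J (hrep q).choose - J e = J ((hrep q).choose - e) := (map_sub J _ _).symm
    show J (hrep q).choose - J e ∈ K
    refine hKJ ⟨⟨(hrep q).choose - e, hdiff, h1.symm⟩, ?_⟩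
    exact sub_mem (hJW _ hWe') (hJW _ hWe)
  -- additivity and homogeneity of jfun
  have hadd : ∀ q r, jfun (q + r) = jfun q + jfun r := by
    intro q r
    obtain ⟨e, hWe, hq⟩ := hrep q
    obtain ⟨f, hWf, hr⟩ := hrep r
    have hqr : (Submodule.Quotient.mk ⟨e + f, (add_mem hWe hWf).1⟩ :
        orthE V K ⧸ K.comap (orthE V K).subtype) = q + r := by
      rw [← hq, ← hr]; rfl
    rw [hkey q e hWe hq, hkey r f hWf hr, hkey (q + r) (e + f) (add_mem hWe hWf) hqr]
    have : (⟨J (e + f), hJW _ (add_mem hWe hWf)⟩ : ↥(orthE V K)) =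
        ⟨J e, hJW e hWe⟩ + ⟨J f, hJW f hWf⟩ := Subtype.ext (map_add J e f)
    rw [this]
    rfl
  have hsmul : ∀ (c : ℝ) q, jfun (c • q) = c • jfun q := by
    intro c q
    obtain ⟨e, hWe, hq⟩ := hrep q
    have hcq : (Submodule.Quotient.mk ⟨c • e, (smul_mem _ c hWe).1⟩ :
        orthE V K ⧸ K.comap (orthE V K).subtype) = c • q := by
      rw [← hq]; rfl
    rw [hkey q e hWe hq, hkey (c • q) (c • e) (smul_mem _ c hWe) hcq]
    have : (⟨J (c • e), hJW _ (smul_mem _ c hWe)⟩ : ↥(orthE V K)) =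
        c • ⟨J e, hJW e hWe⟩ := Subtype.ext (map_smul J c e)
    rw [this]
    rfl
  let Jbar : (orthE V K ⧸ K.comap (orthE V K).subtype) →ₗ[ℝ]
      (orthE V K ⧸ K.comap (orthE V K).subtype) :=
    { toFun := jfun, map_add' := hadd, map_smul' := hsmul }
  have hJbar : ∀ q, Jbar q = jfun q := fun _ => rfl
  have prop1 : ∀ (e : EE V) (he : e ∈ orthE V K) (heJ : J e ∈ orthE V K),
      Jbar (Submodule.Quotient.mk ⟨e, he⟩) = Submodule.Quotient.mk ⟨J e, heJ⟩ := by
    intro e he heJ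
    have hWe : e ∈ orthE V K ⊓ (orthE V K).map J :=
      ⟨he, ⟨-(J e), neg_mem heJ, by rw [map_neg, hJ2, neg_neg]⟩⟩
    rw [hJbar, hkey (Submodule.Quotient.mk ⟨e, he⟩) e hWe rfl]
  have prop2 : ∀ q, Jbar (Jbar q) = -q := by
    intro q
    obtain ⟨e, hWe, hq⟩ := hrep q
    rw [hJbar, hJbar, hkey q e hWe hq,
      hkey _ (J e) (hJWW e hWe) rfl]
    rw [← hq, ← Submodule.Quotient.mk_neg]
    congr 1
    exact Subtype.ext (hJ2 e)
  -- the pairing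
  have key0 : ∀ a b : EE V, a ∈ K → b ∈ orthE V K → pairE V a b = 0 :=
    fun a b ha hb => pairE_refl V _ _ (hb a ha)
  let pfun : (orthE V K ⧸ K.comap (orthE V K).subtype) →
      (orthE V K ⧸ K.comap (orthE V K).subtype) → ℝ := fun q r =>
    pairE V (hrep q).choose (hrep r).choose
  have hpkey : ∀ (q r) (e f : EE V) (he : e ∈ orthE V K) (hf : f ∈ orthE V K),
      (Submodule.Quotient.mk ⟨e, he⟩ :
        orthE V K ⧸ K.comap (orthE V K).subtype) = q →
      (Submodule.Quotient.mk ⟨f, hf⟩ :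
        orthE V K ⧸ K.comap (orthE V K).subtype) = r →
      pfun q r = pairE V e f := by
    intro q r e f he hf hq hr
    obtain ⟨hWe', hq'⟩ := (hrep q).choose_spec
    obtain ⟨hWf', hr'⟩ := (hrep r).choose_spec
    set e' := (hrep q).choose with he'def
    set f' := (hrep r).choose with hf'def
    have hde : e' - e ∈ K := by
      have h0 := hq'.trans hq.symm
      rw [hmemq] at h0
      exact h0
    have hdf : f' - f ∈ K := by
      have h0 := hr'.trans hr.symm
      rw [hmemq] at h0
      exact h0
    have z1 : pairE V (e' - e) (f' - f) = 0 := key0 _ _ hde (hK hdf)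
    have z2 : pairE V (e' - e) f = 0 := key0 _ _ hde hf
    have z3 : pairE V (f' - f) e = 0 := key0 _ _ hdf he
    have z3' : pairE V e (f' - f) = 0 := by rw [pairE_symm]; exact z3
    show pairE V e' f' = pairE V e f
    have hce : e' = (e' - e) + e := by abel
    have hcf : f' = (f' - f) + f := by abel
    rw [hce, hcf]
    simp only [map_add, LinearMap.add_apply, z1, z2, z3']
    simp
  let pbar : LinearMap.BilinForm ℝ (orthE V K ⧸ K.comap (orthE V K).subtype) :=
    LinearMap.mk₂ ℝ pfun
      (by
        intro q1 q2 r
        obtain ⟨e1, hW1, h1⟩ := hrep q1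
        obtain ⟨e2, hW2, h2⟩ := hrep q2
        obtain ⟨f, hWf, hr⟩ := hrep r
        have h12 : (Submodule.Quotient.mk ⟨e1 + e2, (add_mem hW1 hW2).1⟩ :
            orthE V K ⧸ K.comap (orthE V K).subtype) = q1 + q2 := by
          rw [← h1, ← h2]; rfl
        rw [hpkey (q1 + q2) r (e1 + e2) f (add_mem hW1 hW2).1 hWf.1 h12 hr,
          hpkey q1 r e1 f hW1.1 hWf.1 h1 hr, hpkey q2 r e2 f hW2.1 hWf.1 h2 hr]
        simp only [map_add, LinearMap.add_apply])
      (by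
        intro c q r
        obtain ⟨e, hWe, hq⟩ := hrep q
        obtain ⟨f, hWf, hr⟩ := hrep r
        have hcq : (Submodule.Quotient.mk ⟨c • e, (smul_mem _ c hWe).1⟩ :
            orthE V K ⧸ K.comap (orthE V K).subtype) = c • q := by
          rw [← hq]; rfl
        rw [hpkey (c • q) r (c • e) f (smul_mem _ c hWe).1 hWf.1 hcq hr,
          hpkey q r e f hWe.1 hWf.1 hq hr]
        simp only [map_smul, LinearMap.smul_apply, smul_eq_mul])
      (by
        intro q r1 r2
        obtain ⟨e, hWe, hq⟩ := hrep q
        obtain ⟨f1, hW1, h1⟩ := hrep r1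
        obtain ⟨f2, hW2, h2⟩ := hrep r2
        have h12 : (Submodule.Quotient.mk ⟨f1 + f2, (add_mem hW1 hW2).1⟩ :
            orthE V K ⧸ K.comap (orthE V K).subtype) = r1 + r2 := by
          rw [← h1, ← h2]; rfl
        rw [hpkey q (r1 + r2) e (f1 + f2) hWe.1 (add_mem hW1 hW2).1 hq h12,
          hpkey q r1 e f1 hWe.1 hW1.1 hq h1, hpkey q r2 e f2 hWe.1 hW2.1 hq h2]
        simp only [map_add, LinearMap.add_apply])
      (by
        intro c q r
        obtain ⟨e, hWe, hq⟩ := hrep q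
        obtain ⟨f, hWf, hr⟩ := hrep r
        have hcr : (Submodule.Quotient.mk ⟨c • f, (smul_mem _ c hWf).1⟩ :
            orthE V K ⧸ K.comap (orthE V K).subtype) = c • r := by
          rw [← hr]; rfl
        rw [hpkey q (c • r) e (c • f) hWe.1 (smul_mem _ c hWf).1 hq hcr,
          hpkey q r e f hWe.1 hWf.1 hq hr]
        simp only [map_smul, smul_eq_mul])
  have hpbar' : ∀ q r, pbar q r = pfun q r := fun _ _ => rfl
  have hpbar : ∀ e f : ↥(orthE V K),
      pbar (Submodule.Quotient.mk e) (Submodule.Quotient.mk f) = pairE V e f := by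
    intro e f
    rw [hpbar', hpkey _ _ (e : EE V) (f : EE V) e.2 f.2 rfl rfl]
  refine ⟨Jbar, prop1, prop2, pbar, hpbar, ?_⟩
  intro q r
  obtain ⟨e, hWe, hq⟩ := hrep q
  obtain ⟨f, hWf, hr⟩ := hrep r
  rw [hJbar, hJbar, hkey q e hWe hq, hkey r f hWf hr]
  simp only [hpbar']
  rw [hpkey _ _ (J e) (J f) (hJW e hWe) (hJW f hWf) rfl rfl,
    hpkey q r e f hWe.1 hWf.1 hq hr]
  exact hJp e f
end
end
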